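/- Let X₁,…,X_d be real random variables with X_i ~ F_i, and let G_i be the distribution function of |X_i|. Then E(X₁X₂⋯X_d) ≥ −E(∏_{i=1}^d G_i⁻¹(U)) where U is uniform on [0,1]. -/

import Mathlib

open MeasureTheory Set Filter ProbabilityTheory

/-- Generalized inverse (quantile function). -/
noncomputable def quantile (ν : Measure ℝ) (u : ℝ) : ℝ :=
  sInf {x : ℝ | u ≤ (ν (Iic x)).toReal}

/-!
Since `|E ∏ Xᵢ| ≤ E ∏ |Xᵢ|`, it suffices to compare `E ∏ Yᵢ` for `Yᵢ = |Xᵢ|` with its value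
under the comonotone coupling `(G₁⁻¹(U), …, G_d⁻¹(U))`, which has the same marginals. Writing
`∏ Yᵢ` as the volume of the box `∏ (0, Yᵢ)` and applying Tonelli,
`E ∏ Yᵢ = ∫_{t > 0} P(∀ i, Yᵢ > tᵢ) dt`, and likewise for the coupling. If
`m = P(∀ i, Yᵢ > tᵢ)`, then `Gᵢ(tᵢ) ≤ 1 - m` for every `i`, so `Gᵢ⁻¹(u) > tᵢ` for all `i` as soon
as `u ∈ (1 - m, 1)`: the coupling gives every upper orthant at least the same probability.
-/

section Quantile

variable {ν : Measure ℝ} [IsProbabilityMeasure ν] {u t : ℝ}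

lemma quantile_eq_sInf_cdf :
    quantile ν u = sInf {x | u ≤ cdf ν x} := by
  simp only [quantile, cdf_eq_real, measureReal_def]

lemma quantile_le_iff (hu : u ∈ Ioo 0 1) : quantile ν u ≤ t ↔ u ≤ cdf ν t := by
  rw [quantile_eq_sInf_cdf]
  set S := {x | u ≤ cdf ν x}
  obtain ⟨a, ha⟩ :=
    ((tendsto_cdf_atBot (μ := ν)).eventually (eventually_lt_nhds hu.1)).exists_forall_of_atBot
  have hS : BddBelow S := ⟨a, fun x hx => le_of_not_gt fun hxa => (ha x hxa.le).not_ge hx⟩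
  refine ⟨fun h => ?_, csInf_le hS⟩
  have hne : S.Nonempty :=
    ((tendsto_cdf_atTop (μ := ν)).eventually (eventually_ge_nhds hu.2)).exists
  -- `sInf S ∈ S` by right continuity of the distribution function
  have hmem : u ≤ cdf ν (sInf S) := by
    refine ge_of_tendsto (((cdf ν).right_continuous _).mono_left
      (nhdsWithin_mono _ Ioi_subset_Ici_self)) ?_
    filter_upwards [self_mem_nhdsWithin] with x hx
    obtain ⟨s, hs, hsx⟩ := exists_lt_of_csInf_lt hne hx
    exact hs.trans (monotone_cdf ν hsx.le)
  exact hmem.trans (monotone_cdf ν h)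

lemma quantile_monotoneOn : MonotoneOn (quantile ν) (Ioo 0 1) := fun _ hu _ hv huv =>
  (quantile_le_iff (ν := ν) hu).2 (huv.trans ((quantile_le_iff hv).1 le_rfl))

lemma quantile_nonneg (hν : ν (Iio 0) = 0) (hu : u ∈ Ioo 0 1) : 0 ≤ quantile ν u := by
  by_contra! hneg
  have hcdf : cdf ν (quantile ν u) = 0 := by
    rw [cdf_eq_real, measureReal_def, measure_mono_null (Iic_subset_Iio.2 hneg) hν,
      ENNReal.toReal_zero]
  linarith [hu.1, (quantile_le_iff (ν := ν) hu).1 le_rfl]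

end Quantile

lemma lintegral_prod_ofReal_eq_setLIntegral_measure {α ι : Type*} [MeasurableSpace α]
    [Fintype ι] (κ : Measure α) [SFinite κ] {f : ι → α → ℝ} (hf : ∀ i, Measurable (f i)) :
    ∫⁻ x, ∏ i, ENNReal.ofReal (f i x) ∂κ =
      ∫⁻ t in univ.pi fun _ => Ioi 0, κ {x | ∀ i, t i < f i x} := by
  set S := {p : α × (ι → ℝ) | ∀ i, p.2 i < f i p.1}
  have hS : MeasurableSet S := by
    simp only [S, ofPred_forall]
    exact .iInter fun i => measurableSet_lt (by fun_prop) ((hf i).comp measurable_fst)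
  calc ∫⁻ x, ∏ i, ENNReal.ofReal (f i x) ∂κ
      = ∫⁻ x, (volume.restrict (univ.pi fun _ => Ioi 0)) (Prod.mk x ⁻¹' S) ∂κ := by
        refine lintegral_congr fun x => ?_
        rw [Measure.restrict_apply' (.univ_pi fun _ => measurableSet_Ioi)]
        have : Prod.mk x ⁻¹' S ∩ univ.pi (fun _ => Ioi 0) = univ.pi fun i => Ioo 0 (f i x) := by
          ext t; simp [S, and_comm, forall_and]
        simp [this, volume_pi_pi, Real.volume_Ioo]
    _ = κ.prod (volume.restrict (univ.pi fun _ => Ioi 0)) S := (Measure.prod_apply hS).symm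
    _ = _ := Measure.prod_apply_symm hS

section Comonotone

variable {Ω ι : Type*} [MeasurableSpace Ω] {μ : Measure Ω} [IsProbabilityMeasure μ]
  {Y : ι → Ω → ℝ}

lemma cdf_map_eq_one_sub {Z : Ω → ℝ} (hZ : AEMeasurable Z μ) (t : ℝ) :
    cdf (μ.map Z) t = 1 - μ.real {ω | t < Z ω} := by
  have := Measure.isProbabilityMeasure_map hZ
  rw [cdf_eq_real, ← compl_Ioi, probReal_compl_eq_one_sub measurableSet_Ioi,
    map_measureReal_apply_of_aemeasurable hZ measurableSet_Ioi]
  rfl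

lemma measure_forall_lt_le_volume_quantile (hY : ∀ i, AEMeasurable (Y i) μ) (t : ι → ℝ) :
    μ {ω | ∀ i, t i < Y i ω} ≤
      volume {u ∈ Ioo (0 : ℝ) 1 | ∀ i, t i < quantile (μ.map (Y i)) u} := by
  set m := μ.real {ω | ∀ i, t i < Y i ω}
  calc μ {ω | ∀ i, t i < Y i ω} = volume (Ioo (1 - m) 1) := by
        rw [Real.volume_Ioo, sub_sub_cancel, ofReal_measureReal]
    _ ≤ _ := by
      refine measure_mono fun u hu => ?_
      have hu₀ : u ∈ Ioo 0 1 := ⟨by linarith [hu.1, (measureReal_le_one : m ≤ 1)], hu.2⟩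
      refine ⟨hu₀, fun i => ?_⟩
      have := Measure.isProbabilityMeasure_map (hY i)
      rw [← not_le, quantile_le_iff hu₀, cdf_map_eq_one_sub (hY i)]
      have : m ≤ μ.real {ω | t i < Y i ω} := measureReal_mono fun ω hω => hω i
      linarith [hu.1]

theorem lintegral_prod_ofReal_le_setLIntegral_prod_ofReal_quantile [Fintype ι]
    (hY : ∀ i, Measurable (Y i)) :
    ∫⁻ ω, ∏ i, ENNReal.ofReal (Y i ω) ∂μ ≤
      ∫⁻ u in Ioo 0 1, ∏ i, ENNReal.ofReal (quantile (μ.map (Y i)) u) := by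
  have hq i : AEMeasurable (quantile (μ.map (Y i))) (volume.restrict (Ioo 0 1)) := by
    have := Measure.isProbabilityMeasure_map (hY i).aemeasurable (μ := μ)
    exact aemeasurable_restrict_of_monotoneOn measurableSet_Ioo quantile_monotoneOn
  set g := fun i => (hq i).mk
  have hg : ∀ᵐ u ∂volume.restrict (Ioo 0 1), ∀ i, g i u = quantile (μ.map (Y i)) u :=
    ae_all_iff.2 fun i => (hq i).ae_eq_mk.symm
  calc ∫⁻ ω, ∏ i, ENNReal.ofReal (Y i ω) ∂μ
      = ∫⁻ t in univ.pi fun _ => Ioi 0, μ {ω | ∀ i, t i < Y i ω} :=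
        lintegral_prod_ofReal_eq_setLIntegral_measure μ hY
    _ ≤ ∫⁻ t in univ.pi fun _ => Ioi 0, volume.restrict (Ioo 0 1) {u | ∀ i, t i < g i u} := by
        refine lintegral_mono fun t => ?_
        rw [measure_congr (t := {u | ∀ i, t i < quantile (μ.map (Y i)) u})
          (eventuallyEq_set.2 (hg.mono fun u hu => by simp only [mem_ofPred_eq, hu])),
          Measure.restrict_apply' measurableSet_Ioo, inter_comm]
        exact measure_forall_lt_le_volume_quantile (fun i => (hY i).aemeasurable) t
    _ = ∫⁻ u in Ioo 0 1, ∏ i, ENNReal.ofReal (g i u) :=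
        (lintegral_prod_ofReal_eq_setLIntegral_measure _ fun i => (hq i).measurable_mk).symm
    _ = _ := lintegral_congr_ae (hg.mono fun u hu => by simp only [hu])

theorem abs_integral_prod_le_setIntegral_prod_quantile_abs [Fintype ι]
    (hY : ∀ i, Measurable (Y i))
    (hQ : IntegrableOn (fun u => ∏ i, quantile (μ.map fun ω => |Y i ω|) u) (Icc 0 1)) :
    |∫ ω, ∏ i, Y i ω ∂μ| ≤ ∫ u in Icc 0 1, ∏ i, quantile (μ.map fun ω => |Y i ω|) u := by
  have hq₀ : ∀ u ∈ Ioo (0 : ℝ) 1, ∀ i, 0 ≤ quantile (μ.map fun ω => |Y i ω|) u := by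
    intro u hu i
    have := Measure.isProbabilityMeasure_map (hY i).abs.aemeasurable (μ := μ)
    refine quantile_nonneg ?_ hu
    rw [Measure.map_apply (hY i).abs measurableSet_Iio,
      show (fun ω => |Y i ω|) ⁻¹' Iio 0 = ∅ from
        eq_empty_of_forall_notMem fun ω h => (abs_nonneg (Y i ω)).not_gt h, measure_empty]
  have hIcc : volume.restrict (Icc (0 : ℝ) 1) = volume.restrict (Ioo 0 1) :=
    (Measure.restrict_congr_set Ioo_ae_eq_Icc).symm
  have hQ₀ : 0 ≤ᵐ[volume.restrict (Icc 0 1)]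
      fun u => ∏ i, quantile (μ.map fun ω => |Y i ω|) u := by
    rw [hIcc]
    exact (ae_restrict_mem measurableSet_Ioo).mono fun u hu =>
      Finset.prod_nonneg fun i _ => hq₀ u hu i
  rw [← ENNReal.ofReal_le_ofReal_iff (integral_nonneg_of_ae hQ₀), ← Real.enorm_eq_ofReal_abs,
    ofReal_integral_eq_lintegral_ofReal hQ hQ₀, hIcc]
  calc ‖∫ ω, ∏ i, Y i ω ∂μ‖ₑ ≤ ∫⁻ ω, ‖∏ i, Y i ω‖ₑ ∂μ := enorm_integral_le_lintegral_enorm _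
    _ = ∫⁻ ω, ∏ i, ENNReal.ofReal |Y i ω| ∂μ := lintegral_congr fun ω => by
        rw [Real.enorm_eq_ofReal_abs, Finset.abs_prod,
          ENNReal.ofReal_prod_of_nonneg fun i _ => abs_nonneg _]
    _ ≤ ∫⁻ u in Ioo 0 1, ∏ i, ENNReal.ofReal (quantile (μ.map fun ω => |Y i ω|) u) :=
        lintegral_prod_ofReal_le_setLIntegral_prod_ofReal_quantile fun i => (hY i).abs
    _ = _ := setLIntegral_congr_fun measurableSet_Ioo fun u hu =>
        (ENNReal.ofReal_prod_of_nonneg fun i _ => hq₀ u hu i).symm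

end Comonotone

theorem stmt_3_general {Ω : Type*} [MeasurableSpace Ω] (μ : Measure Ω) [IsProbabilityMeasure μ]
    (d : ℕ) (X : Fin d → Ω → ℝ) (hm : ∀ i, Measurable (X i))
    (hIntQ : IntegrableOn
      (fun u => ∏ i, quantile (μ.map (fun ω => |X i ω|)) u) (Icc (0:ℝ) 1) volume) :
    -∫ u in Icc (0:ℝ) 1, ∏ i, quantile (μ.map (fun ω => |X i ω|)) u
      ≤ ∫ ω, ∏ i, X i ω ∂μ :=
  neg_le_of_abs_le (abs_integral_prod_le_setIntegral_prod_quantile_abs hm hIntQ)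

/-- `E(X₁⋯X_d) ≥ −E(∏ G_i⁻¹(U))` where `G_i` is the distribution function of `|X_i|`. -/
theorem stmt_3 {Ω : Type*} [MeasurableSpace Ω] (μ : Measure Ω) [IsProbabilityMeasure μ]
    (d : ℕ) (X : Fin d → Ω → ℝ) (hm : ∀ i, Measurable (X i))
    (hInt : Integrable (fun ω => ∏ i, X i ω) μ)
    (hIntQ : IntegrableOn
      (fun u => ∏ i, quantile (μ.map (fun ω => |X i ω|)) u) (Icc (0:ℝ) 1) volume) :
    -∫ u in Icc (0:ℝ) 1, ∏ i, quantile (μ.map (fun ω => |X i ω|)) u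
      ≤ ∫ ω, ∏ i, X i ω ∂μ :=
  stmt_3_general μ d X hm hIntQ
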